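/- arXiv:math/0605013 — 4 statements merged into one kernel-verified Lean document; each statement's English description precedes it below -/
import Mathlib

section
/- For every integer n ≥ 1, the set Ω_{(1+i)ⁿ} = {r + s·i : r, s ∈ ℤ, 0 ≤ r < 2^⌈n/2⌉, 0 ≤ s < 2^{n−⌈n/2⌉}} is a complete set of representatives for ℤ[i]/((1+i)ⁿ); that is, every Gaussian integer is congruent modulo (1+i)ⁿ to exactly one element of Ω_{(1+i)ⁿ}. -/
/-!
Since `(1 + i)² = 2i`, the power `(1 + i)ⁿ` is associated to `2ᵏ` or to `2ᵏ(1 + i)` with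
`k = ⌊n/2⌋`, and `(1 + i)ⁿ ∣ u` becomes `2^⌊n/2⌋ ∣ Im u` and `2^⌈n/2⌉ ∣ Re u + Im u`.
A class modulo `(1 + i)ⁿ` therefore fixes the imaginary part of a representative modulo
`2^⌊n/2⌋` and then its real part modulo `2^⌈n/2⌉`.
-/

open Zsqrtd

theorem Nat.ceil_natCast_div_two {K : Type*} [Field K] [LinearOrder K] [IsStrictOrderedRing K]
    [FloorSemiring K] (n : ℕ) : ⌈(n : K) / 2⌉₊ = (n + 1) / 2 := by
  rcases Nat.even_or_odd' n with ⟨k, rfl | rfl⟩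
  · rw [show (2 * k + 1) / 2 = k by omega, Nat.cast_mul, Nat.cast_two,
      mul_div_cancel_left₀ _ two_ne_zero, Nat.ceil_natCast]
  · rw [show (2 * k + 1 + 1) / 2 = k + 1 by omega, Nat.ceil_eq_iff k.succ_ne_zero]
    push_cast
    constructor <;> linarith

theorem Int.existsUnique_emod_dvd_sub (x : ℤ) {m : ℤ} (hm : 0 < m) :
    ∃! r : ℤ, (0 ≤ r ∧ r < m) ∧ m ∣ x - r := by
  refine ⟨x % m, ⟨⟨emod_nonneg x hm.ne', emod_lt_of_pos x hm⟩,
    modEq_iff_dvd.mp (mod_modEq x m)⟩, ?_⟩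
  rintro r ⟨⟨hr₀, hr⟩, hdvd⟩
  rw [← emod_eq_of_lt hr₀ hr]
  exact modEq_iff_dvd.mpr hdvd

namespace GaussianInt

theorem isUnit_sqrtd : IsUnit (sqrtd : GaussianInt) :=
  .of_mul_eq_one (-sqrtd) (by ext <;> simp)

theorem one_add_sqrtd_sq : (1 + sqrtd : GaussianInt) ^ 2 = 2 * sqrtd := by
  ext <;> simp [sq]

theorem associated_one_add_sqrtd_pow_two_mul (k : ℕ) :
    Associated ((1 + sqrtd : GaussianInt) ^ (2 * k)) ((2 ^ k : ℤ) : GaussianInt) := by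
  rw [pow_mul, one_add_sqrtd_sq, mul_pow]
  push_cast
  exact associated_mul_unit_left _ _ (isUnit_sqrtd.pow k)

theorem intCast_mul_one_add_sqrtd_dvd_iff (c : ℤ) (u : GaussianInt) :
    (c : GaussianInt) * (1 + sqrtd) ∣ u ↔ c ∣ u.im ∧ 2 * c ∣ u.re + u.im := by
  constructor
  · rintro ⟨v, rfl⟩
    refine ⟨⟨v.re + v.im, ?_⟩, ⟨v.re, ?_⟩⟩ <;>
      simp only [re_mul, im_mul, re_intCast, im_intCast, re_add, im_add, re_one, im_one, re_sqrtd,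
        im_sqrtd] <;>
      ring
  · rintro ⟨⟨s, hs⟩, ⟨t, ht⟩⟩
    refine ⟨⟨t, s - t⟩, ?_⟩
    ext <;>
      simp only [re_mul, im_mul, re_intCast, im_intCast, re_add, im_add, re_one, im_one, re_sqrtd,
        im_sqrtd]
    · linear_combination ht - hs
    · linear_combination hs

theorem one_add_sqrtd_pow_dvd_iff (n : ℕ) (u : GaussianInt) :
    (1 + sqrtd) ^ n ∣ u ↔ 2 ^ (n / 2) ∣ u.im ∧ 2 ^ ((n + 1) / 2) ∣ u.re + u.im := by
  rcases Nat.even_or_odd' n with ⟨k, rfl | rfl⟩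
  · rw [(associated_one_add_sqrtd_pow_two_mul k).dvd_iff_dvd_left, intCast_dvd,
      show 2 * k / 2 = k by omega, show (2 * k + 1) / 2 = k by omega, and_comm]
    exact and_congr_right fun h ↦ (dvd_add_left h).symm
  · rw [pow_succ, ((associated_one_add_sqrtd_pow_two_mul k).mul_right _).dvd_iff_dvd_left,
      intCast_mul_one_add_sqrtd_dvd_iff, show (2 * k + 1) / 2 = k by omega,
      show (2 * k + 1 + 1) / 2 = k + 1 by omega, pow_succ']

theorem existsUnique_re_im_rep {m₁ m₂ : ℤ} (hm₁ : 0 < m₁) (hm₂ : 0 < m₂) (z : GaussianInt) :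
    ∃! w : GaussianInt, (0 ≤ w.re ∧ w.re < m₁ ∧ 0 ≤ w.im ∧ w.im < m₂) ∧
      (m₂ ∣ (z - w).im ∧ m₁ ∣ (z - w).re + (z - w).im) := by
  obtain ⟨s, ⟨hs, hs_dvd⟩, hs_unique⟩ := Int.existsUnique_emod_dvd_sub z.im hm₂
  obtain ⟨r, ⟨hr, hr_dvd⟩, hr_unique⟩ := Int.existsUnique_emod_dvd_sub (z.re + z.im - s) hm₁
  refine ⟨⟨r, s⟩, ⟨⟨hr.1, hr.2, hs.1, hs.2⟩, hs_dvd, ?_⟩, ?_⟩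
  · convert hr_dvd using 1
    simp only [re_sub, im_sub]
    ring
  · rintro w ⟨⟨hre₀, hre, him₀, him⟩, him_dvd, hsum_dvd⟩
    have him_eq : w.im = s := hs_unique _ ⟨⟨him₀, him⟩, him_dvd⟩
    have hre_eq : w.re = r := hr_unique _ ⟨⟨hre₀, hre⟩, by
      convert hsum_dvd using 1
      simp only [re_sub, im_sub, him_eq]
      ring⟩
    ext <;> assumption

end GaussianInt

theorem stmt1_general (n : ℕ) (z : GaussianInt) :
    ∃! w : GaussianInt,
      (0 ≤ w.re ∧ w.re < 2 ^ ⌈(n : ℚ) / 2⌉₊ ∧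
        0 ≤ w.im ∧ w.im < 2 ^ (n - ⌈(n : ℚ) / 2⌉₊)) ∧
      ((1 + Zsqrtd.sqrtd) ^ n : GaussianInt) ∣ (z - w) := by
  rw [Nat.ceil_natCast_div_two, show n - (n + 1) / 2 = n / 2 by omega]
  simp_rw [GaussianInt.one_add_sqrtd_pow_dvd_iff]
  exact GaussianInt.existsUnique_re_im_rep (by positivity) (by positivity) z

/-- For every integer `n ≥ 1`, the set
`Ω_{(1+i)ⁿ} = {r + s·i : r, s ∈ ℤ, 0 ≤ r < 2^⌈n/2⌉, 0 ≤ s < 2^{n−⌈n/2⌉}}`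
is a complete set of representatives for `ℤ[i]/((1+i)ⁿ)`: every Gaussian
integer is congruent modulo `(1+i)ⁿ` to exactly one element of it. -/
theorem stmt1 (n : ℕ) (hn : 1 ≤ n) (z : GaussianInt) :
    ∃! w : GaussianInt,
      (0 ≤ w.re ∧ w.re < 2 ^ ⌈(n : ℚ) / 2⌉₊ ∧
        0 ≤ w.im ∧ w.im < 2 ^ (n - ⌈(n : ℚ) / 2⌉₊)) ∧
      ((1 + Zsqrtd.sqrtd) ^ n : GaussianInt) ∣ (z - w) :=
  stmt1_general n z
end

section
/- Let N be a nonzero Gaussian integer, and for each nonzero y ∈ ℤ[i] let Ω_y ⊆ ℤ[i] be a fixed complete set of representatives for ℤ[i]/(y). Then every 2×2 matrix α with entries in ℤ[i] and determinant N has a unique decomposition α = γ·[[m, x],[0, N/m]] where γ ∈ SL(2,ℤ[i]), m ∈ ℤ[i] divides N with N/m standard, and x ∈ Ω_{N/m} (Gaussian Hecke decomposition). -/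
noncomputable section
open Matrix

lemma gi_ext {z w : GaussianInt} (h1 : z.re = w.re) (h2 : z.im = w.im) : z = w := by
  cases z; cases w; simp_all

lemma std_exists (z : GaussianInt) (hz : z ≠ 0) :
    ∃ u v : GaussianInt, u * v = 1 ∧ 0 < (u * z).re ∧ 0 ≤ (u * z).im := by
  have h0 : z.re ≠ 0 ∨ z.im ≠ 0 := by
    by_contra h
    push_neg at h
    exact hz (gi_ext h.1 h.2)
  rcases lt_trichotomy 0 z.im with him | him | him
  · rcases lt_or_ge 0 z.re with hre | hre
    · exact ⟨1, 1, by norm_num, by simpa using hre, by simpa using le_of_lt him⟩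
    · refine ⟨⟨0, -1⟩, ⟨0, 1⟩, ?_, ?_, ?_⟩
      · exact gi_ext (by simp [Zsqrtd.re_mul]) (by simp [Zsqrtd.im_mul])
      · simp [Zsqrtd.re_mul] <;> linarith
      · simp [Zsqrtd.im_mul] <;> linarith
  · rcases lt_trichotomy 0 z.re with hre | hre | hre
    · exact ⟨1, 1, by norm_num, by simpa using hre, by simp [← him]⟩
    · exact absurd (gi_ext hre.symm him.symm) hz
    · refine ⟨-1, -1, by norm_num, ?_, ?_⟩
      · simp [Zsqrtd.re_mul] <;> linarith
      · simp [Zsqrtd.im_mul] <;> linarith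
  · rcases lt_or_ge z.re 0 with hre | hre
    · refine ⟨-1, -1, by norm_num, ?_, ?_⟩
      · simp [Zsqrtd.re_mul] <;> linarith
      · simp [Zsqrtd.im_mul] <;> linarith
    · refine ⟨⟨0, 1⟩, ⟨0, -1⟩, ?_, ?_, ?_⟩
      · exact gi_ext (by simp [Zsqrtd.re_mul]) (by simp [Zsqrtd.im_mul])
      · simp [Zsqrtd.re_mul] <;> linarith
      · simp [Zsqrtd.im_mul] <;> linarith

lemma unit_std {u v k₁ k₂ : GaussianInt} (huv : u * v = 1) (hk : u * k₁ = k₂)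
    (h1 : 0 < k₁.re) (h2 : 0 ≤ k₁.im) (h3 : 0 < k₂.re) (h4 : 0 ≤ k₂.im) : u = 1 := by
  have hnorm : u.norm * v.norm = 1 := by rw [← Zsqrtd.norm_mul, huv, Zsqrtd.norm_one]
  have hun : u.norm = u.re * u.re + u.im * u.im := by
    simp [Zsqrtd.norm_def]
  have hvn : 0 ≤ v.norm := Zsqrtd.norm_nonneg (by norm_num) v
  have hunn : 0 ≤ u.norm := Zsqrtd.norm_nonneg (by norm_num) u
  have h1' : u.norm = 1 := by
    rcases Int.eq_one_of_mul_eq_one_right hunn hnorm with h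
    exact h
  have hsum : u.re * u.re + u.im * u.im = 1 := by rw [← hun, h1']
  have hre2 : (u * k₁).re = k₂.re := by rw [hk]
  have him2 : (u * k₁).im = k₂.im := by rw [hk]
  rw [Zsqrtd.re_mul] at hre2
  rw [Zsqrtd.im_mul] at him2
  have hr : -1 ≤ u.re ∧ u.re ≤ 1 := by constructor <;> nlinarith [sq_nonneg u.im, sq_nonneg u.re]
  have hs : -1 ≤ u.im ∧ u.im ≤ 1 := by constructor <;> nlinarith [sq_nonneg u.im, sq_nonneg u.re]
  have hrc : u.re = -1 ∨ u.re = 0 ∨ u.re = 1 := by omega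
  have hic : u.im = -1 ∨ u.im = 0 ∨ u.im = 1 := by omega
  rcases hrc with hre | hre | hre <;> rcases hic with him | him | him <;>
      rw [hre, him] at hsum hre2 him2
  · exfalso; norm_num at hsum
  · exfalso; norm_num at hre2; linarith
  · exfalso; norm_num at hsum
  · exfalso; norm_num at him2; linarith
  · exfalso; norm_num at hsum
  · exfalso; norm_num at hre2; linarith
  · exfalso; norm_num at hsum
  · exact gi_ext (by simp [hre]) (by simp [him])
  · exfalso; norm_num at hsum

lemma heckeP_unique (N : GaussianInt) (hN : N ≠ 0)
    (Ω : GaussianInt → Set GaussianInt)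
    (hΩ : ∀ y : GaussianInt, y ≠ 0 → ∀ z : GaussianInt,
      ∃! w : GaussianInt, w ∈ Ω y ∧ y ∣ (z - w))
    (α : Matrix (Fin 2) (Fin 2) GaussianInt)
    (d₁ d₂ : Matrix (Fin 2) (Fin 2) GaussianInt × GaussianInt × GaussianInt × GaussianInt)
    (h₁ : d₁.1.det = 1 ∧ d₁.2.1 * d₁.2.2.1 = N ∧ 0 < d₁.2.2.1.re ∧ 0 ≤ d₁.2.2.1.im ∧
      d₁.2.2.2 ∈ Ω d₁.2.2.1 ∧ α = d₁.1 * !![d₁.2.1, d₁.2.2.2; 0, d₁.2.2.1])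
    (h₂ : d₂.1.det = 1 ∧ d₂.2.1 * d₂.2.2.1 = N ∧ 0 < d₂.2.2.1.re ∧ 0 ≤ d₂.2.2.1.im ∧
      d₂.2.2.2 ∈ Ω d₂.2.2.1 ∧ α = d₂.1 * !![d₂.2.1, d₂.2.2.2; 0, d₂.2.2.1]) :
    d₁ = d₂ := by
  obtain ⟨γ₁, m₁, k₁, x₁⟩ := d₁
  obtain ⟨γ₂, m₂, k₂, x₂⟩ := d₂
  obtain ⟨hdet₁, hmk₁, hkre₁, hkim₁, hΩ₁, hα₁⟩ := h₁
  obtain ⟨hdet₂, hmk₂, hkre₂, hkim₂, hΩ₂, hα₂⟩ := h₂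
  simp only at *
  have hm₁ : m₁ ≠ 0 := fun h => hN (by rw [← hmk₁, h, zero_mul])
  have hk₁ : k₁ ≠ 0 := fun h => hN (by rw [← hmk₁, h, mul_zero])
  have hu₂ : IsUnit γ₂.det := by rw [hdet₂]; exact isUnit_one
  have hinv : γ₂⁻¹ * γ₂ = 1 := Matrix.nonsing_inv_mul γ₂ hu₂
  set T₁ : Matrix (Fin 2) (Fin 2) GaussianInt := !![m₁, x₁; 0, k₁] with hT₁
  set T₂ : Matrix (Fin 2) (Fin 2) GaussianInt := !![m₂, x₂; 0, k₂] with hT₂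
  set γ : Matrix (Fin 2) (Fin 2) GaussianInt := γ₂⁻¹ * γ₁ with hγdef
  have hγT : γ * T₁ = T₂ := by
    rw [hγdef, Matrix.mul_assoc, ← hα₁, hα₂, ← Matrix.mul_assoc, hinv, Matrix.one_mul]
  have hγdet : γ.det = 1 := by
    rw [hγdef, Matrix.det_mul, Matrix.det_nonsing_inv, hdet₁, hdet₂]
    simp
  have e10 : γ 1 0 * m₁ + γ 1 1 * 0 = 0 := by
    have := congrFun (congrFun hγT 1) 0
    simpa [Matrix.mul_apply, Fin.sum_univ_two, hT₁, hT₂] using this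
  have hγ10 : γ 1 0 = 0 := by
    have : γ 1 0 * m₁ = 0 := by linear_combination e10
    exact (mul_eq_zero.mp this).resolve_right hm₁
  have e11 : γ 1 0 * x₁ + γ 1 1 * k₁ = k₂ := by
    have := congrFun (congrFun hγT 1) 1
    simpa [Matrix.mul_apply, Fin.sum_univ_two, hT₁, hT₂] using this
  have e00 : γ 0 0 * m₁ + γ 0 1 * 0 = m₂ := by
    have := congrFun (congrFun hγT 0) 0
    simpa [Matrix.mul_apply, Fin.sum_univ_two, hT₁, hT₂] using this
  have e01 : γ 0 0 * x₁ + γ 0 1 * k₁ = x₂ := by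
    have := congrFun (congrFun hγT 0) 1
    simpa [Matrix.mul_apply, Fin.sum_univ_two, hT₁, hT₂] using this
  have hdet2 : γ 0 0 * γ 1 1 = 1 := by
    have := Matrix.det_fin_two γ
    rw [hγdet, hγ10] at this
    linear_combination -this
  have hk₁₂ : γ 1 1 * k₁ = k₂ := by
    rw [hγ10] at e11; linear_combination e11
  have hu1 : γ 1 1 = 1 :=
    unit_std (u := γ 1 1) (v := γ 0 0) (by linear_combination hdet2) hk₁₂
      hkre₁ hkim₁ hkre₂ hkim₂
  have hγ00 : γ 0 0 = 1 := by
    rw [hu1, mul_one] at hdet2; exact hdet2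
  have hkk : k₁ = k₂ := by rw [← hk₁₂, hu1, one_mul]
  have hmm : m₁ = m₂ := by rw [← e00, hγ00]; ring
  have hxx : x₁ = x₂ := by
    obtain ⟨w, hw, hwu⟩ := hΩ k₁ hk₁ x₂
    have h1 : x₁ = w := hwu x₁ ⟨hΩ₁, ⟨γ 0 1, by rw [hγ00] at e01; linear_combination -e01⟩⟩
    have h2 : x₂ = w := hwu x₂ ⟨hkk ▸ hΩ₂, ⟨0, by ring⟩⟩
    rw [h1, h2]
  have hTT : T₁ = T₂ := by rw [hT₁, hT₂, hkk, hmm, hxx]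
  have hγγ : γ₁ = γ₂ := by
    have h : γ₁ * T₁ = γ₂ * T₁ := by rw [← hα₁, hTT, ← hα₂]
    have h2 : γ₁ * (T₁ * T₁.adjugate) = γ₂ * (T₁ * T₁.adjugate) := by
      rw [← Matrix.mul_assoc, ← Matrix.mul_assoc, h]
    rw [Matrix.mul_adjugate] at h2
    have hdT : T₁.det = N := by
      rw [hT₁, Matrix.det_fin_two_of]; linear_combination hmk₁
    rw [hdT, Matrix.mul_smul, Matrix.mul_one, Matrix.mul_smul, Matrix.mul_one] at h2
    apply Matrix.ext
    intro i j
    have h3 := congrFun (congrFun h2 i) j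
    simp only [Matrix.smul_apply, smul_eq_mul] at h3
    exact mul_left_cancel₀ hN h3
  simp [hγγ, hmm, hkk, hxx]

/-- **Gaussian Hecke decomposition.** Let `N` be a nonzero
Gaussian integer, and for each nonzero `y ∈ ℤ[i]` let `Ω y` be a fixed
complete set of representatives for `ℤ[i]/(y)`.  Then every 2×2 matrix `α`
over `ℤ[i]` with determinant `N` has a unique decomposition
`α = γ·[[m, x],[0, k]]` with `γ ∈ SL(2,ℤ[i])`, `m·k = N` (so `m ∣ N` and
`k = N/m`), `k` standard (`Re k > 0`, `Im k ≥ 0`), and `x ∈ Ω k`. -/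
theorem stmt2 (N : GaussianInt) (hN : N ≠ 0)
    (Ω : GaussianInt → Set GaussianInt)
    (hΩ : ∀ y : GaussianInt, y ≠ 0 → ∀ z : GaussianInt,
      ∃! w : GaussianInt, w ∈ Ω y ∧ y ∣ (z - w))
    (α : Matrix (Fin 2) (Fin 2) GaussianInt) (hα : α.det = N) :
    ∃! d : Matrix (Fin 2) (Fin 2) GaussianInt × GaussianInt × GaussianInt × GaussianInt,
      d.1.det = 1 ∧
      d.2.1 * d.2.2.1 = N ∧
      0 < d.2.2.1.re ∧ 0 ≤ d.2.2.1.im ∧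
      d.2.2.2 ∈ Ω d.2.2.1 ∧
      α = d.1 * !![d.2.1, d.2.2.2; 0, d.2.2.1] := by
  have hdet : α 0 0 * α 1 1 - α 0 1 * α 1 0 = N := by rw [← Matrix.det_fin_two]; exact hα
  set g := EuclideanDomain.gcd (α 0 0) (α 1 0) with hgdef
  have hg : g ≠ 0 := by
    intro h
    rw [hgdef, EuclideanDomain.gcd_eq_zero_iff] at h
    apply hN; rw [← hdet, h.1, h.2]; ring
  obtain ⟨a', ha⟩ := EuclideanDomain.gcd_dvd_left (α 0 0) (α 1 0)
  obtain ⟨c', hc⟩ := EuclideanDomain.gcd_dvd_right (α 0 0) (α 1 0)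
  have hbez := EuclideanDomain.gcd_eq_gcd_ab (α 0 0) (α 1 0)
  set p := EuclideanDomain.gcdA (α 0 0) (α 1 0) with hp
  set q := EuclideanDomain.gcdB (α 0 0) (α 1 0) with hq
  have hone : a' * p + c' * q = 1 := by
    apply mul_left_cancel₀ hg
    rw [mul_one]
    calc g * (a' * p + c' * q) = (g * a') * p + (g * c') * q := by ring
    _ = (α 0 0) * p + (α 1 0) * q := by rw [← ha, ← hc]
    _ = g := by rw [← hbez]
  set γ₀ : Matrix (Fin 2) (Fin 2) GaussianInt := !![p, q; -c', a'] with hγ₀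
  have hγ₀det : γ₀.det = 1 := by
    rw [hγ₀, Matrix.det_fin_two_of]; linear_combination hone
  set β : Matrix (Fin 2) (Fin 2) GaussianInt := γ₀ * α with hβ
  have hβdet : β.det = N := by rw [hβ, Matrix.det_mul, hγ₀det, hα, one_mul]
  have hβ10 : β 1 0 = 0 := by
    have : β 1 0 = -c' * α 0 0 + a' * α 1 0 := by
      rw [hβ, Matrix.mul_apply, Fin.sum_univ_two, hγ₀]
      norm_num [Matrix.cons_val_zero, Matrix.cons_val_one, Matrix.head_cons]
    rw [this]; linear_combination (-c') * ha + a' * hc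
  have hprod : β 0 0 * β 1 1 = N := by
    have h := Matrix.det_fin_two β
    rw [hβdet, hβ10] at h
    linear_combination -h
  have hβ11 : β 1 1 ≠ 0 := fun h => hN (by rw [← hprod, h, mul_zero])
  obtain ⟨u, v, huv, hre, him⟩ := std_exists (β 1 1) hβ11
  set m := v * β 0 0 with hm
  set k := u * β 1 1 with hk
  set x' := v * β 0 1 with hx'
  have hmk : m * k = N := by
    rw [hm, hk, show v * β 0 0 * (u * β 1 1) = (u * v) * (β 0 0 * β 1 1) by ring, huv,
      one_mul, hprod]
  have hkne : k ≠ 0 := fun h => hN (by rw [← hmk, h, mul_zero])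
  obtain ⟨w, ⟨hwΩ, hwdvd⟩, -⟩ := hΩ k hkne x'
  obtain ⟨t, ht⟩ := hwdvd
  set Γ : Matrix (Fin 2) (Fin 2) GaussianInt := !![v, 0; 0, u] * γ₀ with hΓ
  have hΓdet : Γ.det = 1 := by
    rw [hΓ, Matrix.det_mul, hγ₀det, Matrix.det_fin_two_of, mul_one]
    linear_combination huv
  have hΓu : IsUnit Γ.det := by rw [hΓdet]; exact isUnit_one
  have hΓα : Γ * α = !![m, x'; 0, k] := by
    have h : Γ * α = !![v, 0; 0, u] * β := by rw [hΓ, hβ, Matrix.mul_assoc]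
    rw [h]
    apply Matrix.ext
    intro i j
    fin_cases i <;> fin_cases j <;>
      simp [Matrix.mul_apply, Fin.sum_univ_two, hβ10, hm, hk, hx']
  have hT : !![(1 : GaussianInt), t; 0, 1] * !![m, w; 0, k] = !![m, x'; 0, k] := by
    apply Matrix.ext
    intro i j
    fin_cases i <;> fin_cases j <;>
      simp [Matrix.mul_apply, Fin.sum_univ_two] <;> linear_combination -ht
  set γf : Matrix (Fin 2) (Fin 2) GaussianInt := Γ⁻¹ * !![(1 : GaussianInt), t; 0, 1]
    with hγf
  have hγfdet : γf.det = 1 := by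
    rw [hγf, Matrix.det_mul, Matrix.det_nonsing_inv, hΓdet, Matrix.det_fin_two_of]
    simp
  have hαeq : α = γf * !![m, w; 0, k] := by
    rw [hγf, Matrix.mul_assoc, hT, ← hΓα, ← Matrix.mul_assoc,
      Matrix.nonsing_inv_mul Γ hΓu, Matrix.one_mul]
  refine ⟨(γf, m, k, w), ⟨hγfdet, hmk, hre, him, hwΩ, hαeq⟩, ?_⟩
  intro y hy
  exact heckeP_unique N hN Ω hΩ α y (γf, m, k, w) hy ⟨hγfdet, hmk, hre, him, hwΩ, hαeq⟩
end
end

section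
/- In ℂ ≅ ℝ²: (a) the square G_U = convexHull{0, 2, 1+i, 1−i} is an exact fundamental domain for the action of the lattice (1+i)ℤ[i] on ℂ by translations; (b) the triangle G = convexHull{1, 2, 1+i} satisfies: G_U is the union of ρᵏ(G) for k = 0,1,2,3, where ρ(z) = i(z−1)+1 is rotation by π/2 about 1, with ρᵏ(G) ∩ G contained in the boundary of G for k ≢ 0 mod 4; and (c) G is an exact fundamental domain for the action on ℂ of the group A = {z ↦ iᵏ·z + c : k ∈ ℤ, c ∈ (1+i)ℤ[i]} of affine transformations (the action of Γ*^{φ₁} induced on the boundary ℂ of ℍ³). -/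
noncomputable section
open Complex

def Lat1i : Set ℂ := {c | ∃ a b : ℤ, c = (1 + Complex.I) * ((a : ℂ) + (b : ℂ) * Complex.I)}

def GU : Set ℂ := convexHull ℝ ({0, 2, 1 + Complex.I, 1 - Complex.I} : Set ℂ)

def Gtri : Set ℂ := convexHull ℝ ({1, 2, 1 + Complex.I} : Set ℂ)

def rho : ℂ → ℂ := fun z => Complex.I * (z - 1) + 1

/-!
In the coordinates `u = re z + im z`, `v = re z - im z` the lattice `(1+i)ℤ[i]` is `2ℤ × 2ℤ` and
`G_U` is the square `[0, 2]²`, which gives (a) by taking integer parts. The rotation `ρ` maps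
`G_U` into itself, and its iterates carry `G` onto the four quadrants of `G_U` cut out by
`re z = 1` and `im z = 0`, which gives (b). Since `ρᵏ z = iᵏ z + (1 - iᵏ)` with
`1 - iᵏ ∈ (1+i)ℤ[i]`, (c) follows from (a) and (b): if `iᵏ w + c ∈ G` with `w` interior to `G`,
then `ρᵏ w` is interior to `G_U` and differs from `iᵏ w + c` by a lattice vector, so the two
coincide, and then `w = ρ³ᵏ (ρᵏ w) ∈ ρ³ᵏ G ∩ G ⊆ ∂G` unless `k ≡ 0 mod 4`.
-/

open Set Filter Topology

theorem exists_pos_add_smul_mem_of_mem_interior {E : Type*} [AddCommGroup E] [TopologicalSpace E]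
    [Module ℝ E] [ContinuousAdd E] [ContinuousSMul ℝ E] {s : Set E} {x : E}
    (hx : x ∈ interior s) (v : E) : ∃ t : ℝ, 0 < t ∧ x + t • v ∈ s := by
  have hcont : Continuous fun t : ℝ => x + t • v := by fun_prop
  have hlim : Tendsto (fun t : ℝ => x + t • v) (𝓝[>] 0) (𝓝 x) :=
    (hcont.tendsto' 0 x (by simp)).mono_left nhdsWithin_le_nhds
  obtain ⟨t, hts, ht⟩ :=
    ((hlim.eventually (mem_interior_iff_mem_nhds.mp hx)).and self_mem_nhdsWithin).exists
  exact ⟨t, ht, hts⟩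

theorem image_inter_image_subset_image_frontier {X : Type*} [TopologicalSpace X] {F : Set X}
    {g₁ g₂ : X → X} (h₁₂ : ∀ w₁ ∈ interior F, ∀ w₂ ∈ F, g₁ w₁ ≠ g₂ w₂)
    (h₂₁ : ∀ w₂ ∈ interior F, ∀ w₁ ∈ F, g₂ w₂ ≠ g₁ w₁) :
    g₁ '' F ∩ g₂ '' F ⊆ g₁ '' frontier F ∩ g₂ '' frontier F := by
  rintro _ ⟨⟨w₁, hw₁, rfl⟩, w₂, hw₂, he⟩
  refine ⟨⟨w₁, ?_, rfl⟩, w₂, ?_, he⟩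
  · exact (mem_frontier_iff_notMem_interior hw₁).2 fun hi => h₁₂ w₁ hi w₂ hw₂ he.symm
  · exact (mem_frontier_iff_notMem_interior hw₂).2 fun hi => h₂₁ w₂ hi w₁ hw₁ he

theorem isOpenMap_mul_add {K : Type*} [DivisionRing K] [TopologicalSpace K] [IsTopologicalRing K]
    {a : K} (ha : a ≠ 0) (b : K) : IsOpenMap fun z => a * z + b :=
  ((Homeomorph.mulLeft₀ a ha).trans (Homeomorph.addRight b)).isOpenMap

theorem mem_Gtri {z : ℂ} : z ∈ Gtri ↔ 1 ≤ z.re ∧ 0 ≤ z.im ∧ z.re + z.im ≤ 2 := by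
  constructor
  · have hconv : Convex ℝ {z : ℂ | 1 ≤ z.re ∧ 0 ≤ z.im ∧ z.re + z.im ≤ 2} :=
      (convex_halfSpace_ge reLm.isLinear 1).inter
        ((convex_halfSpace_ge imLm.isLinear 0).inter
          (convex_halfSpace_le (reLm + imLm).isLinear 2))
    exact fun hz => convexHull_min (by simp [insert_subset_iff]; norm_num) hconv hz
  · rintro ⟨h₁, h₂, h₃⟩
    refine mem_convexHull_of_exists_fintype ![2 - z.re - z.im, z.re - 1, z.im] ![1, 2, 1 + I]
      ?_ ?_ ?_ ?_
    · intro i; fin_cases i <;> simp <;> linarith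
    · simp [Fin.sum_univ_three]; ring
    · intro i; fin_cases i <;> simp
    · simp [Fin.sum_univ_three]; apply Complex.ext <;> simp; ring

theorem mem_GU {z : ℂ} : z ∈ GU ↔ z.re + z.im ∈ Icc (0 : ℝ) 2 ∧ z.re - z.im ∈ Icc (0 : ℝ) 2 := by
  constructor
  · have hconv : Convex ℝ {z : ℂ | z.re + z.im ∈ Icc (0 : ℝ) 2 ∧ z.re - z.im ∈ Icc (0 : ℝ) 2} :=
      ((convex_Icc 0 2).linear_preimage (reLm + imLm)).inter
        ((convex_Icc 0 2).linear_preimage (reLm - imLm))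
    exact fun hz => convexHull_min (by simp [insert_subset_iff]; norm_num) hconv hz
  · rintro ⟨⟨h₁, h₂⟩, h₃, h₄⟩
    have hp : (z.re + z.im) / 2 ∈ Icc (0 : ℝ) 1 := ⟨by linarith, by linarith⟩
    have hq : (z.re - z.im) / 2 ∈ Icc (0 : ℝ) 1 := ⟨by linarith, by linarith⟩
    generalize hp' : (z.re + z.im) / 2 = p at hp
    generalize hq' : (z.re - z.im) / 2 = q at hq
    refine mem_convexHull_of_exists_fintype ![(1 - p) * (1 - q), p * q, p * (1 - q), (1 - p) * q]
      ![0, 2, 1 + I, 1 - I] ?_ ?_ ?_ ?_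
    · intro i; fin_cases i <;> simp <;> apply mul_nonneg <;> linarith [hp.1, hp.2, hq.1, hq.2]
    · simp [Fin.sum_univ_four]; ring
    · intro i; fin_cases i <;> simp
    · simp [Fin.sum_univ_four]; apply Complex.ext <;> simp <;> linarith

theorem Gtri_subset_GU : Gtri ⊆ GU := fun z hz => by
  rw [mem_Gtri] at hz
  rw [mem_GU]
  exact ⟨⟨by linarith, by linarith⟩, by linarith, by linarith⟩

theorem interior_Gtri_subset :
    interior Gtri ⊆ {z | 1 < z.re ∧ 0 < z.im ∧ z.re + z.im < 2} := fun z hz => by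
  obtain ⟨s, hs, hs'⟩ := exists_pos_add_smul_mem_of_mem_interior hz (-1 - I)
  obtain ⟨t, ht, ht'⟩ := exists_pos_add_smul_mem_of_mem_interior hz (1 + I)
  simp only [mem_Gtri, add_re, add_im, real_smul, mul_re, mul_im, ofReal_re, ofReal_im,
    sub_re, sub_im, neg_re, neg_im, one_re, one_im, I_re, I_im] at hs' ht'
  exact ⟨by linarith, by linarith, by linarith⟩

theorem interior_GU_subset :
    interior GU ⊆ {z | z.re + z.im ∈ Ioo (0 : ℝ) 2 ∧ z.re - z.im ∈ Ioo (0 : ℝ) 2} := fun z hz => by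
  obtain ⟨s, hs, hs'⟩ := exists_pos_add_smul_mem_of_mem_interior hz (-1)
  obtain ⟨t, ht, ht'⟩ := exists_pos_add_smul_mem_of_mem_interior hz 1
  simp only [mem_GU, mem_Icc, add_re, add_im, real_smul, mul_re, mul_im, ofReal_re, ofReal_im,
    neg_re, neg_im, one_re, one_im] at hs' ht'
  exact ⟨⟨by linarith, by linarith⟩, by linarith, by linarith⟩

theorem mem_Lat1i {c : ℂ} :
    c ∈ Lat1i ↔ ∃ m n : ℤ, c.re + c.im = 2 * m ∧ c.re - c.im = 2 * n := by
  constructor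
  · rintro ⟨a, b, rfl⟩
    exact ⟨a, -b, by simp; ring, by simp; ring⟩
  · rintro ⟨m, n, hm, hn⟩
    refine ⟨m, -n, Complex.ext ?_ ?_⟩ <;> simp <;> linarith

theorem add_mem_Lat1i {c d : ℂ} (hc : c ∈ Lat1i) (hd : d ∈ Lat1i) : c + d ∈ Lat1i := by
  obtain ⟨a, b, rfl⟩ := hc
  obtain ⟨a', b', rfl⟩ := hd
  exact ⟨a + a', b + b', by push_cast; ring⟩

theorem sub_mem_Lat1i {c d : ℂ} (hc : c ∈ Lat1i) (hd : d ∈ Lat1i) : c - d ∈ Lat1i := by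
  obtain ⟨a, b, rfl⟩ := hc
  obtain ⟨a', b', rfl⟩ := hd
  exact ⟨a - a', b - b', by push_cast; ring⟩

theorem I_mul_mem_Lat1i {c : ℂ} (hc : c ∈ Lat1i) : I * c ∈ Lat1i := by
  obtain ⟨a, b, rfl⟩ := hc
  exact ⟨-b, a, by push_cast; linear_combination (1 + I) * (b : ℂ) * I_sq⟩

theorem I_pow_mul_mem_Lat1i {c : ℂ} (hc : c ∈ Lat1i) (k : ℕ) : I ^ k * c ∈ Lat1i := by
  induction k with
  | zero => simpa
  | succ k ih => rw [pow_succ', mul_assoc]; exact I_mul_mem_Lat1i ih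

theorem one_sub_I_pow_mem_Lat1i (k : ℕ) : 1 - I ^ k ∈ Lat1i := by
  induction k with
  | zero => exact ⟨0, 0, by simp⟩
  | succ k ih =>
    have h : 1 - I ^ (k + 1) = (1 - I) + I * (1 - I ^ k) := by ring
    exact h ▸ add_mem_Lat1i ⟨0, -1, by push_cast; linear_combination I_sq⟩ (I_mul_mem_Lat1i ih)

theorem exists_sub_mem_GU (z : ℂ) : ∃ c ∈ Lat1i, z - c ∈ GU := by
  set m := ⌊(z.re + z.im) / 2⌋
  set n := ⌊(z.re - z.im) / 2⌋
  refine ⟨(1 + I) * (m - n * I), ⟨m, -n, by push_cast; ring⟩, ?_⟩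
  have hm₁ := Int.floor_le ((z.re + z.im) / 2)
  have hm₂ := Int.lt_floor_add_one ((z.re + z.im) / 2)
  have hn₁ := Int.floor_le ((z.re - z.im) / 2)
  have hn₂ := Int.lt_floor_add_one ((z.re - z.im) / 2)
  simp only [mem_GU, mem_Icc, sub_re, sub_im, mul_re, mul_im, add_re, add_im, one_re, one_im,
    I_re, I_im, intCast_re, intCast_im]
  exact ⟨⟨by linarith, by linarith⟩, by linarith, by linarith⟩

theorem eq_zero_of_add_mem_GU {w c : ℂ} (hw : w ∈ interior GU) (hc : c ∈ Lat1i)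
    (hwc : w + c ∈ GU) : c = 0 := by
  obtain ⟨m, n, hm, hn⟩ := mem_Lat1i.mp hc
  obtain ⟨⟨hu₀, hu₂⟩, hv₀, hv₂⟩ := interior_GU_subset hw
  simp only [mem_GU, mem_Icc, add_re, add_im] at hwc
  have h_int : ∀ k : ℤ, (-1 : ℝ) < k → (k : ℝ) < 1 → k = 0 := fun k h₁ h₂ =>
    Int.abs_lt_one_iff.mp (by exact_mod_cast abs_lt.mpr ⟨h₁, h₂⟩)
  have hm₀ := h_int m (by linarith) (by linarith)
  have hn₀ := h_int n (by linarith) (by linarith)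
  simp only [hm₀, hn₀, Int.cast_zero, mul_zero] at hm hn
  exact Complex.ext (by simp; linarith) (by simp; linarith)

theorem add_ne_add_of_mem_interior_GU {c₁ c₂ : ℂ} (hc₁ : c₁ ∈ Lat1i) (hc₂ : c₂ ∈ Lat1i)
    (hne : c₁ ≠ c₂) : ∀ w₁ ∈ interior GU, ∀ w₂ ∈ GU, w₁ + c₁ ≠ w₂ + c₂ := by
  intro w₁ hw₁ w₂ hw₂ he
  have hw₂' : w₁ + (c₁ - c₂) = w₂ := by linear_combination he
  exact hne (sub_eq_zero.mp (eq_zero_of_add_mem_GU hw₁ (sub_mem_Lat1i hc₁ hc₂) (hw₂' ▸ hw₂)))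

theorem rho_iterate (k : ℕ) : rho^[k] = fun z => I ^ k * z + (1 - I ^ k) := by
  induction k with
  | zero => funext z; simp
  | succ k ih => funext z; rw [Function.iterate_succ_apply', ih, rho, pow_succ]; ring

theorem rho_iterate_four : rho^[4] = id := by
  rw [rho_iterate]; funext z; simp

theorem mapsTo_rho_GU : MapsTo rho GU GU := fun z hz => by
  simp only [rho, mem_GU, mem_Icc, add_re, add_im, mul_re, mul_im, sub_re, sub_im, I_re, I_im,
    one_re, one_im] at hz ⊢
  exact ⟨⟨by linarith, by linarith⟩, by linarith, by linarith⟩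

theorem rho_iterate_image_Gtri_subset_GU (k : ℕ) : rho^[k] '' Gtri ⊆ GU :=
  ((mapsTo_rho_GU.iterate k).mono_left Gtri_subset_GU).image_subset

theorem GU_eq_iUnion_rho_iterate_image_Gtri : GU = ⋃ k : Fin 4, rho^[(k : ℕ)] '' Gtri := by
  refine Subset.antisymm (fun z hz => ?_)
    (iUnion_subset fun k => rho_iterate_image_Gtri_subset_GU k)
  suffices ∃ k : Fin 4, rho^[4 - k] z ∈ Gtri by
    obtain ⟨k, hk⟩ := this
    refine mem_iUnion.mpr ⟨k, _, hk, ?_⟩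
    rw [← Function.iterate_add_apply, (by omega : (k : ℕ) + (4 - k) = 4), rho_iterate_four, id]
  simp only [mem_GU, mem_Icc] at hz
  rcases le_total 1 z.re with hre | hre <;> rcases le_total 0 z.im with him | him <;>
    [refine ⟨0, ?_⟩; refine ⟨3, ?_⟩; refine ⟨1, ?_⟩; refine ⟨2, ?_⟩] <;>
    · rw [rho_iterate, mem_Gtri]
      simp [pow_succ]
      exact ⟨by linarith, by linarith, by linarith⟩

theorem rho_iterate_image_Gtri_inter_subset_frontier {k : ℕ} (hk : k % 4 ≠ 0) :
    rho^[k] '' Gtri ∩ Gtri ⊆ frontier Gtri := by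
  rintro _ ⟨⟨w, hw, rfl⟩, hz⟩
  refine (mem_frontier_iff_notMem_interior hz).2 fun hint => ?_
  have h := interior_Gtri_subset hint
  rw [mem_Gtri] at hw
  rw [rho_iterate, I_pow_eq_pow_mod] at h
  rcases (by omega : k % 4 = 1 ∨ k % 4 = 2 ∨ k % 4 = 3) with hk' | hk' | hk' <;>
    simp [hk', pow_succ] at h <;> linarith [h.1, h.2.1]

theorem mod_four_eq_zero_and_eq_zero_of_I_pow_mul_add_mem_Gtri {w c : ℂ} {k : ℕ}
    (hw : w ∈ interior Gtri) (hc : c ∈ Lat1i) (hwc : I ^ k * w + c ∈ Gtri) :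
    k % 4 = 0 ∧ c = 0 := by
  have hopen : IsOpenMap rho^[k] := by
    rw [rho_iterate]; exact isOpenMap_mul_add (pow_ne_zero k I_ne_zero) _
  have hρw : rho^[k] w ∈ interior GU :=
    interior_mono (rho_iterate_image_Gtri_subset_GU k) (hopen.image_interior_subset _ ⟨w, hw, rfl⟩)
  have hshift : rho^[k] w + (c - (1 - I ^ k)) = I ^ k * w + c := by rw [rho_iterate]; ring
  have hc' : c - (1 - I ^ k) = 0 :=
    eq_zero_of_add_mem_GU hρw (sub_mem_Lat1i hc (one_sub_I_pow_mem_Lat1i k))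
      (hshift ▸ Gtri_subset_GU hwc)
  have hρG : rho^[k] w ∈ Gtri := by
    rw [hc', add_zero] at hshift
    rwa [hshift]
  have hk : k % 4 = 0 := by
    by_contra hk
    have hback : rho^[3 * k] (rho^[k] w) = w := by
      rw [← Function.iterate_add_apply, show 3 * k + k = 4 * k by ring, Function.iterate_mul,
        rho_iterate_four, Function.iterate_id, id]
    exact (rho_iterate_image_Gtri_inter_subset_frontier (by omega : 3 * k % 4 ≠ 0)
      ⟨⟨_, hρG, hback⟩, interior_subset hw⟩).2 hw
  rw [I_pow_eq_pow_mod, hk, pow_zero, sub_self, sub_zero] at hc'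
  exact ⟨hk, hc'⟩

theorem I_pow_mul_add_ne_of_mem_interior_Gtri {k₁ k₂ : Fin 4} {c₁ c₂ : ℂ} (hc₁ : c₁ ∈ Lat1i)
    (hc₂ : c₂ ∈ Lat1i) (hne : (k₁, c₁) ≠ (k₂, c₂)) :
    ∀ w₁ ∈ interior Gtri, ∀ w₂ ∈ Gtri, I ^ (k₁ : ℕ) * w₁ + c₁ ≠ I ^ (k₂ : ℕ) * w₂ + c₂ := by
  intro w₁ hw₁ w₂ hw₂ he
  have hinv : I ^ (3 * (k₂ : ℕ)) * I ^ (k₂ : ℕ) = 1 := by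
    rw [← pow_add, show 3 * (k₂ : ℕ) + k₂ = 4 * k₂ by ring, pow_mul, I_pow_four, one_pow]
  have hw₂' : I ^ ((k₁ : ℕ) + 3 * k₂) * w₁ + I ^ (3 * (k₂ : ℕ)) * (c₁ - c₂) = w₂ := by
    linear_combination I ^ (3 * (k₂ : ℕ)) * he + w₂ * hinv
  obtain ⟨hk, hc⟩ := mod_four_eq_zero_and_eq_zero_of_I_pow_mul_add_mem_Gtri hw₁
    (I_pow_mul_mem_Lat1i (sub_mem_Lat1i hc₁ hc₂) _) (hw₂' ▸ hw₂)
  have hk₁₂ : k₁ = k₂ := by omega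
  have hc₁₂ : c₁ = c₂ := sub_eq_zero.mp ((mul_eq_zero.mp hc).resolve_left (pow_ne_zero _ I_ne_zero))
  exact hne (by rw [hk₁₂, hc₁₂])

/-- (a) `G_U` is an exact fundamental domain for the action
of `(1+i)ℤ[i]` on `ℂ` by translations; (b) `G_U = ⋃_{k=0}^{3} ρᵏ(G)` where
`ρ(z) = i(z−1)+1`, with `ρᵏ(G) ∩ G ⊆ ∂G` for `k ≢ 0 mod 4`; (c) `G` is an
exact fundamental domain for the action on `ℂ` of the group
`A = {z ↦ iᵏ·z + c : k ∈ ℤ, c ∈ (1+i)ℤ[i]}`. -/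
theorem stmt11 :
    -- (a)
    ((⋃ c ∈ Lat1i, (fun z => z + c) '' GU) = Set.univ ∧
      ∀ c₁ ∈ Lat1i, ∀ c₂ ∈ Lat1i, c₁ ≠ c₂ →
        ((fun z => z + c₁) '' GU) ∩ ((fun z => z + c₂) '' GU) ⊆
          ((fun z => z + c₁) '' frontier GU) ∩ ((fun z => z + c₂) '' frontier GU)) ∧
    -- (b)
    (GU = ⋃ k : Fin 4, rho^[(k : ℕ)] '' Gtri ∧
      ∀ k : ℕ, k % 4 ≠ 0 → (rho^[k] '' Gtri) ∩ Gtri ⊆ frontier Gtri) ∧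
    -- (c)
    ((⋃ k : Fin 4, ⋃ c ∈ Lat1i, (fun z => Complex.I ^ (k : ℕ) * z + c) '' Gtri) =
        Set.univ ∧
      ∀ k₁ k₂ : Fin 4, ∀ c₁ ∈ Lat1i, ∀ c₂ ∈ Lat1i, (k₁, c₁) ≠ (k₂, c₂) →
        ((fun z => Complex.I ^ (k₁ : ℕ) * z + c₁) '' Gtri) ∩
            ((fun z => Complex.I ^ (k₂ : ℕ) * z + c₂) '' Gtri) ⊆
          ((fun z => Complex.I ^ (k₁ : ℕ) * z + c₁) '' frontier Gtri) ∩
            ((fun z => Complex.I ^ (k₂ : ℕ) * z + c₂) '' frontier Gtri)) := by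
  refine ⟨⟨?_, ?_⟩, ⟨GU_eq_iUnion_rho_iterate_image_Gtri,
    fun k hk => rho_iterate_image_Gtri_inter_subset_frontier hk⟩, ?_, ?_⟩
  · refine eq_univ_of_forall fun z => ?_
    obtain ⟨c, hc, hzc⟩ := exists_sub_mem_GU z
    exact mem_iUnion₂.mpr ⟨c, hc, z - c, hzc, sub_add_cancel z c⟩
  · intro c₁ hc₁ c₂ hc₂ hne
    exact image_inter_image_subset_image_frontier (add_ne_add_of_mem_interior_GU hc₁ hc₂ hne)
      (add_ne_add_of_mem_interior_GU hc₂ hc₁ hne.symm)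
  · refine eq_univ_of_forall fun z => ?_
    obtain ⟨c, hc, hzc⟩ := exists_sub_mem_GU z
    rw [GU_eq_iUnion_rho_iterate_image_Gtri, mem_iUnion] at hzc
    obtain ⟨k, w, hw, hwz⟩ := hzc
    rw [rho_iterate] at hwz
    refine mem_iUnion.mpr ⟨k, mem_iUnion₂.mpr
      ⟨_, add_mem_Lat1i (one_sub_I_pow_mem_Lat1i k) hc, w, hw, ?_⟩⟩
    linear_combination hwz
  · intro k₁ k₂ c₁ hc₁ c₂ hc₂ hne
    exact image_inter_image_subset_image_frontier
      (I_pow_mul_add_ne_of_mem_interior_Gtri hc₁ hc₂ hne)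
      (I_pow_mul_add_ne_of_mem_interior_Gtri hc₂ hc₁ hne.symm)
end
end

section
/- Each of the three sets Ξ₁₂, Ξ₁, Ξ₂ intersected with SL(2,ℝ) consists of integer matrices and is described by congruences mod 2: Ξ₁₂ ∩ SL(2,ℝ) = {γ ∈ SL(2,ℤ) : γ ≡ [[1,0],[0,1]] or [[0,1],[1,0]] mod 2}, Ξ₁ ∩ SL(2,ℝ) = {γ ∈ SL(2,ℤ) : γ ≡ [[0,1],[1,1]] or [[1,1],[0,1]] mod 2}, and Ξ₂ ∩ SL(2,ℝ) = {γ ∈ SL(2,ℤ) : γ ≡ [[1,1],[1,0]] or [[1,0],[1,1]] mod 2}. -/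
noncomputable section
open Matrix Complex

abbrev M2 := Matrix (Fin 2) (Fin 2) ℂ
abbrev M3 := Matrix (Fin 3) (Fin 3) ℂ

/-- `z` is a Gaussian integer. -/
def IsGI (z : ℂ) : Prop := ∃ a b : ℤ, z = (a : ℂ) + (b : ℂ) * Complex.I

/-- `z ≡ w mod (1+i)` in `ℤ[i]` (for Gaussian integers `z`, `w`). -/
def congMod (z w : ℂ) : Prop :=
  ∃ a b : ℤ, z - w = (1 + Complex.I) * ((a : ℂ) + (b : ℂ) * Complex.I)

/-- `SL(2,ℤ[i])` as a set of complex matrices. -/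
def SL2ZI : Set M2 := {γ | (∀ i j, IsGI (γ i j)) ∧ γ.det = 1}

/-- `Ξ₁₂ = red⁻¹({[[1,0],[0,1]], [[0,1],[1,0]]})`. -/
def Xi12 : Set M2 := {γ | γ ∈ SL2ZI ∧
  ((congMod (γ 0 0) 1 ∧ congMod (γ 0 1) 0 ∧ congMod (γ 1 0) 0 ∧ congMod (γ 1 1) 1) ∨
   (congMod (γ 0 0) 0 ∧ congMod (γ 0 1) 1 ∧ congMod (γ 1 0) 1 ∧ congMod (γ 1 1) 0))}

/-- `Ξ₁ = red⁻¹({[[0,1],[1,1]], [[1,1],[0,1]]})`. -/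
def Xi1 : Set M2 := {γ | γ ∈ SL2ZI ∧
  ((congMod (γ 0 0) 0 ∧ congMod (γ 0 1) 1 ∧ congMod (γ 1 0) 1 ∧ congMod (γ 1 1) 1) ∨
   (congMod (γ 0 0) 1 ∧ congMod (γ 0 1) 1 ∧ congMod (γ 1 0) 0 ∧ congMod (γ 1 1) 1))}

/-- `Ξ₂ = red⁻¹({[[1,1],[1,0]], [[1,0],[1,1]]})`. -/
def Xi2 : Set M2 := {γ | γ ∈ SL2ZI ∧
  ((congMod (γ 0 0) 1 ∧ congMod (γ 0 1) 1 ∧ congMod (γ 1 0) 1 ∧ congMod (γ 1 1) 0) ∨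
   (congMod (γ 0 0) 1 ∧ congMod (γ 0 1) 0 ∧ congMod (γ 1 0) 1 ∧ congMod (γ 1 1) 1))}

/-- Real matrices inside `Mat₂(ℂ)`. -/
def SL2R : Set M2 := {g | ∀ i j, (g i j).im = 0}

/-- Integer matrices of determinant one that reduce mod 2 to one of the two
given residue matrices `(entries a₁₁ a₁₂ a₂₁ a₂₂ and b₁₁ b₁₂ b₂₁ b₂₂)`. -/
def IntCong2 (a11 a12 a21 a22 b11 b12 b21 b22 : ℤ) : Set M2 :=
  {γ | ∃ m : Matrix (Fin 2) (Fin 2) ℤ, (∀ i j, γ i j = ((m i j : ℤ) : ℂ)) ∧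
    m.det = 1 ∧
    ((m 0 0 % 2 = a11 ∧ m 0 1 % 2 = a12 ∧ m 1 0 % 2 = a21 ∧ m 1 1 % 2 = a22) ∨
     (m 0 0 % 2 = b11 ∧ m 0 1 % 2 = b12 ∧ m 1 0 % 2 = b21 ∧ m 1 1 % 2 = b22))}

lemma isGI_real (z : ℂ) (h : IsGI z) (him : z.im = 0) : ∃ a : ℤ, z = (a : ℂ) := by
  obtain ⟨a, b, rfl⟩ := h
  simp at him
  refine ⟨a, ?_⟩
  simp [him]

lemma congMod_int_iff (a b : ℤ) : congMod (a : ℂ) (b : ℂ) ↔ a % 2 = b % 2 := by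
  constructor
  · rintro ⟨x, y, h⟩
    have hre := congrArg Complex.re h
    have him := congrArg Complex.im h
    simp at hre him
    have h1 : (a : ℝ) - b = x - y := by push_cast at hre ⊢; linarith
    have h2 : (x : ℝ) + y = 0 := by push_cast at him ⊢; linarith
    have h1' : a - b = x - y := by exact_mod_cast h1
    have h2' : x + y = 0 := by exact_mod_cast h2
    omega
  · intro h
    refine ⟨(a - b) / 2, -((a - b) / 2), ?_⟩
    have hk : a - b = 2 * ((a - b) / 2) := by omega
    have h2 : (a : ℂ) - b = 2 * (((a - b) / 2 : ℤ) : ℂ) := by exact_mod_cast hk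
    push_cast
    rw [h2]
    ring_nf
    rw [Complex.I_sq]
    push_cast
    ring

lemma gen_eq (a11 a12 a21 a22 b11 b12 b21 b22 : ℤ)
    (h11 : a11 % 2 = a11) (h12 : a12 % 2 = a12) (h21 : a21 % 2 = a21) (h22 : a22 % 2 = a22)
    (g11 : b11 % 2 = b11) (g12 : b12 % 2 = b12) (g21 : b21 % 2 = b21) (g22 : b22 % 2 = b22) :
    ({γ : M2 | γ ∈ SL2ZI ∧
      ((congMod (γ 0 0) (a11 : ℂ) ∧ congMod (γ 0 1) (a12 : ℂ) ∧ congMod (γ 1 0) (a21 : ℂ) ∧ congMod (γ 1 1) (a22 : ℂ)) ∨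
       (congMod (γ 0 0) (b11 : ℂ) ∧ congMod (γ 0 1) (b12 : ℂ) ∧ congMod (γ 1 0) (b21 : ℂ) ∧ congMod (γ 1 1) (b22 : ℂ)))}
      ∩ SL2R) = IntCong2 a11 a12 a21 a22 b11 b12 b21 b22 := by
  ext γ
  constructor
  · rintro ⟨⟨⟨hGI, hdet⟩, hcong⟩, hreal⟩
    obtain ⟨m00, e00⟩ := isGI_real _ (hGI 0 0) (hreal 0 0)
    obtain ⟨m01, e01⟩ := isGI_real _ (hGI 0 1) (hreal 0 1)
    obtain ⟨m10, e10⟩ := isGI_real _ (hGI 1 0) (hreal 1 0)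
    obtain ⟨m11, e11⟩ := isGI_real _ (hGI 1 1) (hreal 1 1)
    refine ⟨!![m00, m01; m10, m11], ?_, ?_, ?_⟩
    · intro i j
      fin_cases i <;> fin_cases j <;>
        simp only [Matrix.cons_val', Matrix.cons_val_zero, Matrix.cons_val_one,
          Matrix.head_cons, Matrix.empty_val', Matrix.cons_val_fin_one, Matrix.head_fin_const] <;>
        assumption
    · rw [Matrix.det_fin_two] at hdet
      rw [e00, e01, e10, e11] at hdet
      have : ((m00 * m11 - m01 * m10 : ℤ) : ℂ) = ((1 : ℤ) : ℂ) := by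
        push_cast; linear_combination hdet
      have h2 : m00 * m11 - m01 * m10 = 1 := by exact_mod_cast this
      simp [Matrix.det_fin_two, h2]
    · rw [e00] at hcong; rw [e01] at hcong; rw [e10] at hcong; rw [e11] at hcong
      show (m00 % 2 = a11 ∧ m01 % 2 = a12 ∧ m10 % 2 = a21 ∧ m11 % 2 = a22) ∨
        (m00 % 2 = b11 ∧ m01 % 2 = b12 ∧ m10 % 2 = b21 ∧ m11 % 2 = b22)
      rcases hcong with ⟨c1, c2, c3, c4⟩ | ⟨c1, c2, c3, c4⟩
      · left
        rw [congMod_int_iff] at c1 c2 c3 c4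
        exact ⟨by omega, by omega, by omega, by omega⟩
      · right
        rw [congMod_int_iff] at c1 c2 c3 c4
        exact ⟨by omega, by omega, by omega, by omega⟩
  · rintro ⟨m, hm, hdet, hcong⟩
    have hdet2 : m 0 0 * m 1 1 - m 0 1 * m 1 0 = 1 := by
      rw [← Matrix.det_fin_two]; exact hdet
    refine ⟨⟨⟨?_, ?_⟩, ?_⟩, ?_⟩
    · intro i j; exact ⟨m i j, 0, by simp [hm]⟩
    · rw [Matrix.det_fin_two, hm, hm, hm, hm]
      exact_mod_cast congrArg (fun k : ℤ => (k : ℂ)) hdet2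
    · rcases hcong with ⟨c1, c2, c3, c4⟩ | ⟨c1, c2, c3, c4⟩
      · left
        refine ⟨?_, ?_, ?_, ?_⟩ <;> rw [hm, congMod_int_iff] <;> omega
      · right
        refine ⟨?_, ?_, ?_, ?_⟩ <;> rw [hm, congMod_int_iff] <;> omega
    · intro i j; rw [hm]; simp

/-- Each `Ξ ∩ SL(2,ℝ)` consists of integer matrices and is
described by congruences mod 2. -/
theorem stmt15 :
    Xi12 ∩ SL2R = IntCong2 1 0 0 1 0 1 1 0 ∧
    Xi1 ∩ SL2R = IntCong2 0 1 1 1 1 1 0 1 ∧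
    Xi2 ∩ SL2R = IntCong2 1 1 1 0 1 0 1 1 := by
  refine ⟨?_, ?_, ?_⟩
  · have h := gen_eq 1 0 0 1 0 1 1 0 (by decide) (by decide) (by decide) (by decide) (by decide) (by decide) (by decide) (by decide)
    simp only [Int.cast_one, Int.cast_zero] at h
    rw [← h]; rfl
  · have h := gen_eq 0 1 1 1 1 1 0 1 (by decide) (by decide) (by decide) (by decide) (by decide) (by decide) (by decide) (by decide)
    simp only [Int.cast_one, Int.cast_zero] at h
    rw [← h]; rfl
  · have h := gen_eq 1 1 1 0 1 0 1 1 (by decide) (by decide) (by decide) (by decide) (by decide) (by decide) (by decide) (by decide)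
    simp only [Int.cast_one, Int.cast_zero] at h
    rw [← h]; rfl
end
end
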